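/- (MLE fails for correlated mistakes.) In the correlated-mistakes example, maximum likelihood estimation strictly prefers the meaningless classifier to the Bayes posterior classifier: for every choice of transition matrices W^1,…,W^{101} over {0,1} with strictly positive entries, the expected log-likelihood of the Bayes posterior classifier h* satisfies Σ_{c,c' ∈ {0,1}} (1/4) · log( W^1_{c,c} · Π_{m=2}^{101} W^m_{c,c'} ) ≤ 100·log(1/2), while there exist transition matrices W'^1,…,W'^{101} (namely W'^1 with all entries 1/2 and W'^m the identity for m ≥ 2) for which the expected log-likelihood of the meaningless classifier h0 satisfies Σ_{c,c'} (1/4) · log( Σ_d (1/2) · W'^1_{d,c} · Π_{m=2}^{101} W'^m_{d,c'} ) = 2·log(1/2) > 100·log(1/2). -/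

import Mathlib

/-!
The log of the Bayes likelihood splits into a sum over experts. Expert 1 contributes logs of
entries of a stochastic matrix, hence at most `0`, while each of the 100 copies of expert 2
contributes `∑_{c,c'} log W^m_{c,c'} ≤ 4 log (1/2)`, since a probability vector `p` on `k`
points has `∑ log pᵢ ≤ k log (1/k)` (sum `log (k pᵢ) ≤ k pᵢ - 1`). So the Bayes classifier
pays `log (1/2)` for every redundant expert, whereas the meaningless classifier, with expert 1
uninformative and the others truthful, pays only the `2 log (1/2)` of its uniform prediction.
-/

def IsTransitionMatrix {C : Type*} [Fintype C] (W : C → C → ℝ) : Prop :=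
  (∀ c c', 0 ≤ W c c') ∧ (∀ c, ∑ c', W c c' = 1)

open Finset

section

variable {C : Type*} [Fintype C]

theorem IsTransitionMatrix.le_one {W : C → C → ℝ}
    (hW : IsTransitionMatrix W) (c c' : C) : W c c' ≤ 1 :=
  (hW.2 c).symm ▸ single_le_sum (fun d _ => hW.1 c d) (mem_univ c')

theorem IsTransitionMatrix.log_nonpos {W : C → C → ℝ}
    (hW : IsTransitionMatrix W) (c c' : C) : Real.log (W c c') ≤ 0 :=
  Real.log_nonpos (hW.1 c c') (hW.le_one c c')

theorem sum_log_le_card_mul_log_inv_card {ι : Type*} [Fintype ι] {p : ι → ℝ}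
    (hp : ∀ i, 0 < p i) (hsum : ∑ i, p i = 1) :
    ∑ i, Real.log (p i) ≤ Fintype.card ι * Real.log (Fintype.card ι)⁻¹ := by
  obtain ⟨i₀, -⟩ := exists_ne_zero_of_sum_ne_zero (hsum ▸ one_ne_zero)
  set k : ℝ := (Fintype.card ι : ℝ)
  have hk : 0 < k := Nat.cast_pos.mpr (Fintype.card_pos_iff.mpr ⟨i₀⟩)
  have key : ∑ i, Real.log (k * p i) ≤ ∑ i, (k * p i - 1) :=
    sum_le_sum fun i _ => Real.log_le_sub_one_of_pos (mul_pos hk (hp i))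
  simp only [Real.log_mul hk.ne' (hp _).ne', sum_add_distrib, sum_sub_distrib, ← mul_sum,
    hsum, sum_const, card_univ, nsmul_eq_mul] at key
  rw [Real.log_inv]
  linarith

theorem IsTransitionMatrix.sum_sum_log_le {W : C → C → ℝ}
    (hW : IsTransitionMatrix W) (hpos : ∀ c c', 0 < W c c') :
    ∑ c, ∑ c', Real.log (W c c') ≤
      Fintype.card C * (Fintype.card C * Real.log (Fintype.card C)⁻¹) := by
  calc ∑ c, ∑ c', Real.log (W c c')
      ≤ ∑ _c : C, Fintype.card C * Real.log (Fintype.card C)⁻¹ :=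
        sum_le_sum fun c _ => sum_log_le_card_mul_log_inv_card (hpos c) (hW.2 c)
    _ = _ := by simp

theorem sum_sum_log_mul_prod_le {n : ℕ} {W : Fin (n + 1) → C → C → ℝ}
    (hW : ∀ m, IsTransitionMatrix (W m)) (hpos : ∀ m c c', 0 < W m c c') :
    ∑ c, ∑ c', Real.log (W 0 c c * ∏ m : Fin n, W m.succ c c') ≤
      n * (Fintype.card C * (Fintype.card C * Real.log (Fintype.card C)⁻¹)) := by
  calc ∑ c, ∑ c', Real.log (W 0 c c * ∏ m : Fin n, W m.succ c c')
      = ∑ c, ∑ _c' : C, Real.log (W 0 c c) +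
          ∑ m : Fin n, ∑ c, ∑ c', Real.log (W m.succ c c') := by
        simp only [Real.log_mul (hpos 0 _ _).ne'
            (prod_pos fun (m : Fin n) _ => hpos m.succ _ _).ne',
          Real.log_prod fun (m : Fin n) _ => (hpos m.succ _ _).ne', sum_add_distrib]
        exact congrArg _ ((sum_congr rfl fun _ _ => sum_comm).trans sum_comm)
    _ ≤ 0 + ∑ _m : Fin n, Fintype.card C * (Fintype.card C * Real.log (Fintype.card C)⁻¹) :=
        add_le_add (sum_nonpos fun c _ => sum_nonpos fun _ _ => (hW 0).log_nonpos c c)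
          (sum_le_sum fun m _ => (hW m.succ).sum_sum_log_le (hpos m.succ))
    _ = _ := by simp

theorem isTransitionMatrix_uniform [Nonempty C] :
    IsTransitionMatrix fun _ _ : C => (Fintype.card C : ℝ)⁻¹ :=
  ⟨fun _ _ => by positivity, fun _ => by simp⟩

theorem isTransitionMatrix_ite_eq [DecidableEq C] :
    IsTransitionMatrix fun d c : C => if d = c then (1 : ℝ) else 0 :=
  ⟨fun _ _ => by positivity, fun _ => by simp⟩

end

/-- MLE fails for correlated mistakes: in the correlated-mistakes
example, every choice of transition matrices with strictly positive entries
gives the Bayes posterior classifier expected log-likelihood at most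
`100 log(1/2)`, while there exist transition matrices (`W'^1` all-`1/2`,
`W'^m` identity for `m ≥ 2`) giving the meaningless classifier `h0` expected
log-likelihood exactly `2 log(1/2) > 100 log(1/2)`.  Expert 1 is `W 0` and
expert `m ≥ 2` is `W m.succ` for `m : Fin 100`. -/
theorem mle_fails_for_correlated_mistakes :
    (∀ W : Fin 101 → Fin 2 → Fin 2 → ℝ, (∀ m, IsTransitionMatrix (W m)) →
      (∀ m c c', 0 < W m c c') →
      ∑ c : Fin 2, ∑ c' : Fin 2,
          (1 / 4 : ℝ) * Real.log (W 0 c c * ∏ m : Fin 100, W m.succ c c') ≤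
        100 * Real.log (1 / 2)) ∧
    (∃ W' : Fin 101 → Fin 2 → Fin 2 → ℝ,
      (∀ m, IsTransitionMatrix (W' m)) ∧
      (∀ d c : Fin 2, W' 0 d c = 1 / 2) ∧
      (∀ (m : Fin 100) (d c : Fin 2), W' m.succ d c = if d = c then 1 else 0) ∧
      ∑ c : Fin 2, ∑ c' : Fin 2, (1 / 4 : ℝ) *
          Real.log (∑ d : Fin 2,
            (1 / 2 : ℝ) * W' 0 d c * ∏ m : Fin 100, W' m.succ d c') =
        2 * Real.log (1 / 2)) ∧
    100 * Real.log (1 / 2) < 2 * Real.log (1 / 2) := by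
  refine ⟨fun W hW hpos => ?_, ?_,
    by linarith [Real.log_neg (by norm_num : (0 : ℝ) < 1 / 2) (by norm_num)]⟩
  · have h := sum_sum_log_mul_prod_le hW hpos
    push_cast [Fintype.card_fin, ← one_div] at h
    simp only [← mul_sum]
    linarith
  · refine ⟨Fin.cons (fun _ _ => 1 / 2) fun _ d c => if d = c then 1 else 0,
      Fin.cases ?uniform fun _ => isTransitionMatrix_ite_eq, fun _ _ => rfl, fun _ _ _ => rfl,
      ?likelihood⟩
    case uniform => simpa using isTransitionMatrix_uniform (C := Fin 2)
    case likelihood =>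
      simp only [Fin.cons_zero, Fin.cons_succ, prod_const, card_univ, Fintype.card_fin, ite_pow,
        one_pow, zero_pow (by norm_num : 100 ≠ 0), mul_ite, mul_one, mul_zero, sum_ite_eq',
        mem_univ, if_true, sum_const, nsmul_eq_mul]
      rw [Real.log_mul (by norm_num) (by norm_num)]
      push_cast
      ring
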